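/- The class of super-consistent programs properly contains the class of odd-cycle-free programs: there exists a disjunctive ASP program that is super-consistent but whose dependency graph contains an odd cycle. In particular, the program consisting of the two rules { a ∨ b. ; a :- not a, not b. } over propositional atoms a, b is super-consistent, i.e., for every set F of facts, the program { a ∨ b. ; a :- not a, not b. } ∪ F has at least one answer set. -/
import Mathlib


/-- A ground disjunctive rule: `head` is the (nonempty) set of head atoms,
`pos` the set of positive body atoms, and `neg` the set of atoms occurring
negated in the body. -/
structure GRule (Atom : Type) where
  head : Set Atom
  pos : Set Atom
  neg : Set Atom
  head_nonempty : head.Nonempty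

/-- The fact `a.` (a rule with singleton head and empty body). -/
def GRule.fact {Atom : Type} (a : Atom) : GRule Atom :=
  ⟨{a}, ∅, ∅, Set.singleton_nonempty a⟩

/-- An interpretation `I` satisfies a ground rule `r`: some head atom is true
in `I` whenever all positive body atoms are in `I` and no negated body atom is in `I`. -/
def satisfiesRule {Atom : Type} (I : Set Atom) (r : GRule Atom) : Prop :=
  r.pos ⊆ I → r.neg ∩ I = ∅ → (r.head ∩ I).Nonempty

/-- `I` is a model of the ground program `P`. -/
def isModel {Atom : Type} (I : Set Atom) (P : Set (GRule Atom)) : Prop :=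
  ∀ r ∈ P, satisfiesRule I r

/-- The Gelfond–Lifschitz reduct `ground(P)^I`: delete rules whose negated body
atoms intersect `I`, and remove the negative literals from the remaining rules. -/
def reduct {Atom : Type} (P : Set (GRule Atom)) (I : Set Atom) : Set (GRule Atom) :=
  { r' | ∃ r ∈ P, r.neg ∩ I = ∅ ∧ r' = ⟨r.head, r.pos, ∅, r.head_nonempty⟩ }

/-- `M` is an answer set of `P` iff `M` is a subset-minimal model of `ground(P)^M`. -/
def isAnswerSet {Atom : Type} (P : Set (GRule Atom)) (M : Set Atom) : Prop :=
  isModel M (reduct P M) ∧ ∀ N : Set Atom, N ⊆ M → isModel N (reduct P M) → N = M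

/-- `P` is super-consistent: for every set of facts `F`, `P ∪ F` has an answer set. -/
def superConsistent {Atom : Type} (P : Set (GRule Atom)) : Prop :=
  ∀ F : Set Atom, ∃ M : Set Atom, isAnswerSet (P ∪ GRule.fact '' F) M

/-- Predicate `p` depends on predicate `q` through an edge of sign `negEdge`
(`true` = negative dependency) in the predicate dependency graph of `P`, where
`pr` maps each atom to its predicate symbol: some rule of `P` has an atom with
predicate `p` in its head and an atom with predicate `q` in its (positive,
resp. negated) body. -/
def depends {Atom Pred : Type} (pr : Atom → Pred) (P : Set (GRule Atom))
    (p : Pred) (negEdge : Bool) (q : Pred) : Prop :=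
  ∃ r ∈ P, (∃ a ∈ r.head, pr a = p) ∧
    ∃ b ∈ (if negEdge then r.neg else r.pos), pr b = q

/-- The dependency graph of `P` has a cycle involving an odd number of
negative dependencies. -/
def hasOddCycle {Atom Pred : Type} (pr : Atom → Pred) (P : Set (GRule Atom)) : Prop :=
  ∃ (k : ℕ) (p : Fin (k + 1) → Pred) (s : Fin (k + 1) → Bool),
    (∀ i, depends pr P (p i) (s i) (p (i + 1))) ∧
    Odd (Finset.univ.filter fun i => s i = true).card

/-- `P` is odd-cycle-free: no cycle of its dependency graph involves an odd
number of negative dependencies. -/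
def oddCycleFree {Atom Pred : Type} (pr : Atom → Pred) (P : Set (GRule Atom)) : Prop :=
  ¬ hasOddCycle pr P

/-- `P` is stratified: every cycle of its dependency graph involves only
positive dependencies. -/
def stratified {Atom Pred : Type} (pr : Atom → Pred) (P : Set (GRule Atom)) : Prop :=
  ¬ ∃ (k : ℕ) (p : Fin (k + 1) → Pred) (s : Fin (k + 1) → Bool),
    (∀ i, depends pr P (p i) (s i) (p (i + 1))) ∧ ∃ i, s i = true

/-- The two propositional atoms `a` and `b` (each is its own 0-ary predicate). -/
inductive PropAtom : Type
  | a : PropAtom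
  | b : PropAtom
deriving DecidableEq

open PropAtom

/-- The rule `a ∨ b.` -/
def ruleOne : GRule PropAtom := ⟨{a, b}, ∅, ∅, Set.insert_nonempty _ _⟩

/-- The rule `a :- not a, not b.` -/
def ruleTwo : GRule PropAtom := ⟨{a}, ∅, {a, b}, Set.singleton_nonempty _⟩

/-- The program `{ a ∨ b. ; a :- not a, not b. }`. -/
def exProg : Set (GRule PropAtom) := {ruleOne, ruleTwo}

lemma facts_subset {F M N : Set PropAtom}
    (hN : isModel N (reduct (exProg ∪ GRule.fact '' F) M)) : F ⊆ N := by
  intro x hx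
  have hr : (⟨{x}, ∅, ∅, Set.singleton_nonempty x⟩ : GRule PropAtom) ∈
      reduct (exProg ∪ GRule.fact '' F) M := by
    refine ⟨GRule.fact x, Or.inr ⟨x, hx, rfl⟩, ?_, rfl⟩
    simp [GRule.fact]
  have := hN _ hr (by simp) (by simp)
  simpa using this

lemma exProg_sc : superConsistent exProg := by
  intro F
  by_cases hb : b ∈ F
  · refine ⟨F, ?_, ?_⟩
    · rintro r' ⟨r, hr, hneg, rfl⟩ _ _
      rcases hr with hr | ⟨x, hx, rfl⟩
      · rcases hr with rfl | rfl
        · exact ⟨b, by simp [ruleOne], hb⟩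
        · exfalso
          have : b ∈ ruleTwo.neg ∩ F := ⟨by simp [ruleTwo], hb⟩
          simp [hneg] at this
      · exact ⟨x, by simp [GRule.fact], hx⟩
    · intro N hNF hN
      exact Set.Subset.antisymm hNF (facts_subset hN)
  · refine ⟨insert a F, ?_, ?_⟩
    · rintro r' ⟨r, hr, hneg, rfl⟩ _ _
      rcases hr with hr | ⟨x, hx, rfl⟩
      · rcases hr with rfl | rfl
        · exact ⟨a, by simp [ruleOne], by simp⟩
        · exfalso
          have : a ∈ ruleTwo.neg ∩ insert a F := ⟨by simp [ruleTwo], by simp⟩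
          simp [hneg] at this
      · exact ⟨x, by simp [GRule.fact], Or.inr hx⟩
    · intro N hNM hN
      have hF : F ⊆ N := facts_subset hN
      have hr1 : (⟨ruleOne.head, ruleOne.pos, ∅, ruleOne.head_nonempty⟩ : GRule PropAtom) ∈
          reduct (exProg ∪ GRule.fact '' F) (insert a F) := by
        refine ⟨ruleOne, Or.inl (Or.inl rfl), ?_, rfl⟩
        simp [ruleOne]
      have hsat := hN _ hr1 (by intro y hy; simp [ruleOne] at hy) (by simp)
      have haN : a ∈ N := by
        obtain ⟨y, hy1, hy2⟩ := hsat
        simp only [ruleOne] at hy1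
        rcases hy1 with rfl | rfl
        · exact hy2
        · exfalso
          rcases hNM hy2 with h | h
          · exact PropAtom.noConfusion h
          · exact hb h
      refine Set.Subset.antisymm hNM ?_
      intro y hy
      rcases hy with rfl | hy
      · exact haN
      · exact hF hy

lemma exProg_odd : hasOddCycle (id : PropAtom → PropAtom) exProg := by
  refine ⟨0, fun _ => a, fun _ => true, ?_, ?_⟩
  · intro i
    exact ⟨ruleTwo, Or.inr rfl, ⟨a, by simp [ruleTwo], rfl⟩, ⟨a, by simp [ruleTwo], rfl⟩⟩
  · simp

/-- Super-consistent programs properly contain odd-cycle-free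
programs: there is a program that is super-consistent but whose dependency
graph contains an odd cycle. In particular `{ a ∨ b. ; a :- not a, not b. }`
is super-consistent (for every set `F` of facts, adding `F` yields a program
with at least one answer set), while its dependency graph has an odd cycle. -/
theorem superConsistent_with_oddCycle :
    (∃ (Atom Pred : Type) (pr : Atom → Pred) (P : Set (GRule Atom)),
      P.Finite ∧ superConsistent P ∧ hasOddCycle pr P) ∧
    superConsistent exProg ∧
    hasOddCycle (id : PropAtom → PropAtom) exProg := by
  refine ⟨⟨PropAtom, PropAtom, id, exProg, ?_, exProg_sc, exProg_odd⟩, exProg_sc, exProg_odd⟩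
  exact (Set.finite_singleton ruleOne).insert ruleTwo |>.subset (by simp [exProg, Set.insert_comm, Set.pair_comm])
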